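/- Fix α with 1 < α < 2 and let N₀ = 3·⌈α + 1⌉. Define c : ℕ → ℝ by c(n) = 0 for n < N₀ and, for n ≥ N₀, c(n) = c(n') + c(n'') + c(n''') + n + n' + n'', where n''' = ⌊n/(α + 1)⌋ + 1, n* = n − n''', n'' = ⌊n*/(α + 1)⌋ + 1, n' = n* − n''. Then (i) c(n + 1) > c(n) for all n ≥ N₀, and (ii) for every ε > 0 there exists N such that for all n ≥ N, c(n) ≥ (c_α − ε)·n·log₂ n. (The function c(n) is the merge cost of α-merge sort, and also of α-stack sort, on the adversarial run-length sequence R_amerge(n); hence both sorts have worst-case merge cost at least (c_α − o(1))·n·log₂ n.) -/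

import Mathlib

/-!
Write `H` for the binary entropy in nats and `t = 1/(α+1)`. If `m = p + q` then
`m log m - p log p - q log q = m H(p/m)`, and when `p = ⌊m/(α+1)⌋ + 1` we have
`0 < p/m - t ≤ 1/m`; since `H` is concave with `H'(t) = log α`, this gives
`m H(p/m) ≤ m H(t) + log α`. The recursion makes two such splits, `n = n''' + n*` and
`n* = n'' + n'`, and pays `n + n*` for them, so by induction
`H(t) c(n) ≥ n log n - (log N₀ + log α) n + log α`, which is the claim as `c_α = log 2 / H(t)`.
For monotonicity, passing from `n` to `n + 1` raises exactly one of `n', n'', n'''` by one and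
fixes the others, so the cost grows by at least one. Both arguments only need `N₀ ≥ 4`.
-/

open Real

/-- The constant `c_α = (α+1)/((α+1)·log₂(α+1) − α·log₂ α)`. -/
noncomputable def cA (α : ℝ) : ℝ :=
  (α + 1) / ((α + 1) * logb 2 (α + 1) - α * logb 2 α)

/-- `n''' = ⌊n/(α+1)⌋ + 1`, the least integer greater than `n/(α+1)`. -/
noncomputable def nPPP (α : ℝ) (n : ℕ) : ℕ := ⌊(n : ℝ) / (α + 1)⌋₊ + 1

/-- `n* = n − n'''`. -/
noncomputable def nStar (α : ℝ) (n : ℕ) : ℕ := n - nPPP α n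

/-- `n'' = ⌊n*/(α+1)⌋ + 1`. -/
noncomputable def nPP (α : ℝ) (n : ℕ) : ℕ := ⌊(nStar α n : ℝ) / (α + 1)⌋₊ + 1

/-- `n' = n* − n''`. -/
noncomputable def nP (α : ℝ) (n : ℕ) : ℕ := nStar α n - nPP α n

open Filter

namespace Nat

lemma floor_add_eq_or {x d : ℝ} (hx : 0 ≤ x) (hd0 : 0 ≤ d) (hd1 : d ≤ 1) :
    ⌊x + d⌋₊ = ⌊x⌋₊ ∨ ⌊x + d⌋₊ = ⌊x⌋₊ + 1 := by
  have hlo : ⌊x⌋₊ ≤ ⌊x + d⌋₊ := Nat.floor_le_floor (by linarith)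
  have hhi : ⌊x + d⌋₊ ≤ ⌊x⌋₊ + 1 := by
    rw [← Nat.floor_add_one hx]
    exact Nat.floor_le_floor (by linarith)
  omega

end Nat

section Split

variable {α : ℝ} {m : ℕ}

lemma nPPP_pos : 0 < nPPP α m := Nat.succ_pos _

lemma div_lt_nPPP : (m : ℝ) / (α + 1) < nPPP α m := by
  simpa [nPPP] using Nat.lt_floor_add_one ((m : ℝ) / (α + 1))

lemma nPPP_le_div_add_one (hα : 0 < α) : (nPPP α m : ℝ) ≤ m / (α + 1) + 1 := by
  have := Nat.floor_le (show 0 ≤ (m : ℝ) / (α + 1) by positivity)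
  push_cast [nPPP]
  linarith

lemma nPPP_add_nStar (hα : 0 < α) (hm : 0 < m) : nPPP α m + nStar α m = m := by
  have hm' : (0 : ℝ) < m := by exact_mod_cast hm
  have : ⌊(m : ℝ) / (α + 1)⌋₊ < m :=
    (Nat.floor_lt (by positivity)).2 (div_lt_self hm' (by linarith))
  simp only [nStar, nPPP] at *
  omega

lemma half_sub_one_lt_nStar (hα : 1 < α) (hm : 0 < m) : (m : ℝ) / 2 - 1 < nStar α m := by
  have hsum : (nPPP α m : ℝ) + nStar α m = m := by
    exact_mod_cast nPPP_add_nStar (by linarith) hm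
  have hm' : (0 : ℝ) < m := by exact_mod_cast hm
  have : (m : ℝ) / (α + 1) < m / 2 := div_lt_div_of_pos_left hm' (by norm_num) (by linarith)
  linarith [nPPP_le_div_add_one (m := m) (by linarith : 0 < α)]

lemma nStar_pos (hα : 1 < α) (hm : 2 ≤ m) : 0 < nStar α m := by
  have hm' : (2 : ℝ) ≤ m := by exact_mod_cast hm
  have : (0 : ℝ) < nStar α m := by linarith [half_sub_one_lt_nStar hα (by omega : 0 < m)]
  exact_mod_cast this

lemma two_le_nStar (hα : 1 < α) (hm : 4 ≤ m) : 2 ≤ nStar α m := by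
  have hm' : (4 : ℝ) ≤ m := by exact_mod_cast hm
  have : (1 : ℝ) < nStar α m := by linarith [half_sub_one_lt_nStar hα (by omega : 0 < m)]
  exact_mod_cast this

lemma nPPP_succ (hα : 0 < α) (hm : 0 < m) :
    (nPPP α (m + 1) = nPPP α m ∧ nStar α (m + 1) = nStar α m + 1) ∨
      (nPPP α (m + 1) = nPPP α m + 1 ∧ nStar α (m + 1) = nStar α m) := by
  have hfloor := Nat.floor_add_eq_or (x := (m : ℝ) / (α + 1)) (d := 1 / (α + 1))
    (by positivity) (by positivity) ((div_le_one (by linarith)).2 (by linarith))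
  rw [← add_div, ← Nat.cast_add_one] at hfloor
  have h := nPPP_add_nStar hα hm
  have h' := nPPP_add_nStar (m := m + 1) hα (by omega)
  simp only [nPPP] at *
  omega

end Split

lemma binEntropy_le_tangent_of_lt {t u : ℝ} (ht : 0 < t) (htu : t < u) (hu : u ≤ 1) :
    binEntropy u ≤ binEntropy t + (u - t) * (log (1 - t) - log t) := by
  have hslope := strictConcave_binEntropy.concaveOn.slope_le_of_hasDerivAt
    ⟨ht.le, by linarith⟩ ⟨by linarith, hu⟩ htu
    (hasDerivAt_binEntropy ht.ne' (by linarith))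
  rw [slope_def_field, div_le_iff₀ (by linarith)] at hslope
  linarith

lemma add_mul_log_add_sub_eq_mul_binEntropy {p q : ℝ} (hp : 0 < p) (hq : 0 < q) :
    (p + q) * log (p + q) - p * log p - q * log q = (p + q) * binEntropy (p / (p + q)) := by
  have hpq : 0 < p + q := by linarith
  have h1 : 1 - p / (p + q) = q / (p + q) := by field_simp; ring
  rw [binEntropy, h1, inv_div, inv_div, log_div hpq.ne' hp.ne', log_div hpq.ne' hq.ne']
  field_simp
  ring

lemma binEntropy_inv_add_one {α : ℝ} (hα : 0 < α) :
    binEntropy (α + 1)⁻¹ = ((α + 1) * log (α + 1) - α * log α) / (α + 1) := by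
  have h1 : 1 - (α + 1)⁻¹ = α / (α + 1) := by field_simp; ring
  rw [binEntropy, h1, inv_inv, inv_div, log_div (by linarith) hα.ne']
  field_simp
  ring

lemma cA_eq_log_two_div {α : ℝ} (hα : 0 < α) : cA α = log 2 / binEntropy (α + 1)⁻¹ := by
  have hden : (α + 1) * logb 2 (α + 1) - α * logb 2 α
      = (α + 1) * binEntropy (α + 1)⁻¹ / log 2 := by
    rw [binEntropy_inv_add_one hα, logb, logb]
    field_simp
  rw [cA, hden, div_div_eq_mul_div, mul_div_mul_left _ _ (by linarith)]

lemma add_mul_log_add_sub_le {α p q : ℝ} (hα : 1 ≤ α) (hp : 0 < p) (hq : 0 < q)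
    (hlo : (p + q) / (α + 1) < p) (hhi : p ≤ (p + q) / (α + 1) + 1) :
    (p + q) * log (p + q) - p * log p - q * log q ≤ (p + q) * binEntropy (α + 1)⁻¹ + log α := by
  have hpq : 0 < p + q := by linarith
  have hα1 : 0 < α + 1 := by linarith
  set t := (α + 1)⁻¹
  set u := p / (p + q)
  have htu : t < u := by
    rw [lt_div_iff₀ hpq, ← div_eq_inv_mul]; exact hlo
  have hu : u ≤ 1 := (div_le_one hpq).2 (by linarith)
  have hslope : log (1 - t) - log t = log α := by
    have : 1 - t = α / (α + 1) := by simp only [t]; field_simp; ring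
    rw [this, log_div (by linarith) hα1.ne', log_inv]
    ring
  have hgap : (p + q) * (u - t) ≤ 1 := by
    simp only [u, t]
    rw [mul_sub, mul_div_cancel₀ _ hpq.ne', ← div_eq_mul_inv]
    linarith
  have hent := binEntropy_le_tangent_of_lt (by positivity) htu hu
  rw [hslope] at hent
  rw [add_mul_log_add_sub_eq_mul_binEntropy hp hq]
  nlinarith [log_nonneg hα]

lemma mul_log_sub_nPPP_nStar_le {α : ℝ} {m : ℕ} (hα : 1 < α) (hm : 2 ≤ m) :
    (m : ℝ) * log m - nPPP α m * log (nPPP α m) - nStar α m * log (nStar α m)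
      ≤ m * binEntropy (α + 1)⁻¹ + log α := by
  have hsum : (nPPP α m : ℝ) + nStar α m = m := by
    exact_mod_cast nPPP_add_nStar (by linarith) (by omega : 0 < m)
  have h := add_mul_log_add_sub_le hα.le (p := nPPP α m) (q := nStar α m)
    (by exact_mod_cast nPPP_pos) (by exact_mod_cast nStar_pos hα hm)
  rw [hsum] at h
  exact h div_lt_nPPP (nPPP_le_div_add_one (by linarith))

section Children

variable {α : ℝ} {n : ℕ}

lemma nPP_add_nP (hα : 1 < α) (hn : 2 ≤ n) : nPP α n + nP α n = nStar α n :=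
  nPPP_add_nStar (by linarith) (nStar_pos hα hn)

lemma nP_pos (hα : 1 < α) (hn : 4 ≤ n) : 0 < nP α n :=
  nStar_pos hα (two_le_nStar hα hn)

lemma nPPP_lt (hα : 1 < α) (hn : 2 ≤ n) : nPPP α n < n := by
  have := nPPP_add_nStar (m := n) (by linarith) (by omega)
  have := nStar_pos hα hn
  omega

lemma nStar_lt (hn : 1 ≤ n) : nStar α n < n := by
  have : 0 < nPPP α n := nPPP_pos
  unfold nStar
  omega

lemma nPP_lt (hα : 1 < α) (hn : 2 ≤ n) : nPP α n < n := by
  have := nPP_add_nP hα hn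
  have := nStar_lt (α := α) (n := n) (by omega)
  omega

lemma nP_lt (hα : 1 < α) (hn : 2 ≤ n) : nP α n < n := by
  have := nPP_add_nP hα hn
  have := nStar_lt (α := α) (n := n) (by omega)
  omega

end Children

-- The recurrence for `c`, with an arbitrary threshold `N` in place of `N₀`.
structure IsAlphaMergeCost (α : ℝ) (N : ℕ) (c : ℕ → ℝ) : Prop where
  eq_zero : ∀ n < N, c n = 0
  eq_rec : ∀ n, N ≤ n →
    c n = c (nP α n) + c (nPP α n) + c (nPPP α n) + (n : ℝ) + (nP α n : ℝ) + (nPP α n : ℝ)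

namespace IsAlphaMergeCost

variable {α : ℝ} {N : ℕ} {c : ℕ → ℝ}

lemma nonneg (hc : IsAlphaMergeCost α N c) (hα : 1 < α) (hN : 2 ≤ N) (n : ℕ) : 0 ≤ c n := by
  induction n using Nat.strong_induction_on with
  | _ n ih =>
    rcases lt_or_ge n N with hn | hn
    · exact (hc.eq_zero n hn).ge
    have := ih (nP α n) (nP_lt hα (by omega))
    have := ih (nPP α n) (nPP_lt hα (by omega))
    have := ih (nPPP α n) (nPPP_lt hα (by omega))
    rw [hc.eq_rec n hn]
    positivity

-- `n'' = (n*)'''` and `n' = (n*)*` hold by definition.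
lemma eq_rec_nStar (hc : IsAlphaMergeCost α N c) {n : ℕ} (hn : N ≤ n) :
    c n = c (nStar α (nStar α n)) + c (nPPP α (nStar α n)) + c (nPPP α n) + n
      + nStar α (nStar α n) + nPPP α (nStar α n) :=
  hc.eq_rec n hn

lemma add_one_le_succ_of_lt (hc : IsAlphaMergeCost α N c) (hα : 1 < α) (hN : 2 ≤ N) {n : ℕ}
    (hn : N ≤ n) (hmono : ∀ k < n, c k ≤ c (k + 1)) : c n + 1 ≤ c (n + 1) := by
  have hrec := hc.eq_rec_nStar hn
  have hrec' := hc.eq_rec_nStar (n := n + 1) (by omega)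
  have hs := nStar_pos (α := α) hα (by omega : 2 ≤ n)
  rcases nPPP_succ (α := α) (by linarith) (by omega : 0 < n) with ⟨h3, hs1⟩ | ⟨h3, hs1⟩
  · rw [h3, hs1] at hrec'
    rcases nPPP_succ (α := α) (by linarith) hs with ⟨h2, h1⟩ | ⟨h2, h1⟩
    · rw [h2, h1] at hrec'
      have := hmono (nStar α (nStar α n)) (nP_lt hα (by omega))
      push_cast at hrec'
      linarith
    · rw [h2, h1] at hrec'
      have := hmono (nPPP α (nStar α n)) (nPP_lt hα (by omega))
      push_cast at hrec'
      linarith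
  · rw [h3, hs1] at hrec'
    have := hmono _ (nPPP_lt hα (by omega))
    push_cast at hrec'
    linarith

lemma le_succ (hc : IsAlphaMergeCost α N c) (hα : 1 < α) (hN : 2 ≤ N) (n : ℕ) :
    c n ≤ c (n + 1) := by
  induction n using Nat.strong_induction_on with
  | _ n ih =>
    rcases lt_or_ge n N with hn | hn
    · rw [hc.eq_zero n hn]
      exact hc.nonneg hα hN _
    · linarith [hc.add_one_le_succ_of_lt hα hN hn ih]

lemma lt_succ (hc : IsAlphaMergeCost α N c) (hα : 1 < α) (hN : 2 ≤ N) {n : ℕ} (hn : N ≤ n) :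
    c n < c (n + 1) := by
  linarith [hc.add_one_le_succ_of_lt hα hN hn fun k _ => hc.le_succ hα hN k]

lemma mul_log_le (hc : IsAlphaMergeCost α N c) (hα : 1 < α) (hN : 4 ≤ N) {n : ℕ} (hn : 1 ≤ n) :
    n * log n - (log N + log α) * n + log α ≤ binEntropy (α + 1)⁻¹ * c n := by
  induction n using Nat.strong_induction_on with
  | _ n ih =>
    rcases lt_or_ge n N with hnN | hnN
    · have hn' : (1 : ℝ) ≤ n := by exact_mod_cast hn
      have hlog : log n ≤ log N := log_le_log (by linarith) (by exact_mod_cast hnN.le)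
      rw [hc.eq_zero n hnN, mul_zero]
      nlinarith [log_nonneg hα.le]
    have i1 := ih (nStar α (nStar α n)) (nP_lt hα (by omega)) (nP_pos hα (by omega))
    have i2 := ih (nPPP α (nStar α n)) (nPP_lt hα (by omega)) nPPP_pos
    have i3 := ih (nPPP α n) (nPPP_lt hα (by omega)) nPPP_pos
    have s1 := mul_log_sub_nPPP_nStar_le hα (m := n) (by omega)
    have s2 := mul_log_sub_nPPP_nStar_le hα (m := nStar α n) (two_le_nStar hα (by omega))
    have e1 : (nPPP α n : ℝ) + nStar α n = n := by
      exact_mod_cast nPPP_add_nStar (by linarith) (by omega)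
    have e2 : (nPPP α (nStar α n) : ℝ) + nStar α (nStar α n) = nStar α n := by
      exact_mod_cast nPP_add_nP hα (by omega)
    rw [hc.eq_rec_nStar hnN]
    linear_combination i1 + i2 + i3 + s1 + s2 + (log N + log α) * e1
      + (log N + log α - binEntropy (α + 1)⁻¹) * e2

lemma eventually_cA_sub_mul_logb_le (hc : IsAlphaMergeCost α N c) (hα : 1 < α) (hN : 4 ≤ N)
    {ε : ℝ} (hε : 0 < ε) : ∀ᶠ n : ℕ in atTop, (cA α - ε) * n * logb 2 n ≤ c n := by
  set h := binEntropy (α + 1)⁻¹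
  have hh : 0 < h := binEntropy_pos (by positivity) (inv_lt_one_of_one_lt₀ (by linarith))
  have hl2 : 0 < log 2 := log_pos one_lt_two
  filter_upwards [(tendsto_log_atTop.comp tendsto_natCast_atTop_atTop).eventually_ge_atTop
    ((log N + log α) * log 2 / (ε * h)), eventually_ge_atTop 1] with n hlog hn
  rw [Function.comp_apply, div_le_iff₀ (by positivity)] at hlog
  have hn0 : (0 : ℝ) < n := by exact_mod_cast hn
  rw [cA_eq_log_two_div (by linarith), logb, ← mul_le_mul_iff_of_pos_right (mul_pos hh hl2)]
  have hlhs : (log 2 / h - ε) * n * (log n / log 2) * (h * log 2)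
      = n * log n * log 2 - n * (log n * (ε * h)) := by
    field_simp
  rw [hlhs]
  nlinarith [hc.mul_log_le hα hN hn, mul_le_mul_of_nonneg_left hlog hn0.le, log_nonneg hα.le]

end IsAlphaMergeCost

theorem alphamerge_lower_bound (α : ℝ) (hα1 : 1 < α) (c : ℕ → ℝ)
    (h0 : ∀ n < 3 * ⌈α + 1⌉₊, c n = 0)
    (hrec : ∀ n, 3 * ⌈α + 1⌉₊ ≤ n →
      c n = c (nP α n) + c (nPP α n) + c (nPPP α n)
            + (n : ℝ) + (nP α n : ℝ) + (nPP α n : ℝ)) :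
    (∀ n, 3 * ⌈α + 1⌉₊ ≤ n → c n < c (n + 1)) ∧
    (∀ ε > (0 : ℝ), ∃ N : ℕ, ∀ n ≥ N, (cA α - ε) * (n : ℝ) * logb 2 n ≤ c n) := by
  have hN : 4 ≤ 3 * ⌈α + 1⌉₊ := by
    have : 1 < ⌈α + 1⌉₊ := Nat.lt_ceil.2 (by push_cast; linarith)
    omega
  have hc : IsAlphaMergeCost α (3 * ⌈α + 1⌉₊) c := ⟨h0, hrec⟩
  exact ⟨fun n hn => hc.lt_succ hα1 (by omega) hn,
    fun ε hε => eventually_atTop.1 (hc.eventually_cA_sub_mul_logb_le hα1 hN hε)⟩
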